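/- arXiv:2411.18118 — 2 statements merged into one kernel-verified Lean document; each statement's English description precedes it below -/
import Mathlib

section
/- Adjoint gradient identity for the reduced cost (single load case): let I : (Fin N → ℝ) × (Fin M → ℝ) → ℝ be a differentiable cost function, fix T₀, and let ũ : Fin N → ℝ solve the adjoint system Kᵀ ·ᵥ ũ = g, where g is the gradient of the partial map u ↦ I(u, T₀) at u(T₀). Then the reduced cost Ĩ(T) = I(u(T), T) is differentiable at T₀ and for every direction h, its directional derivative satisfies DĨ(T₀)[h] = D_T I(u(T₀), ·)(T₀)[h] + ⟨ũ, Df_T(T₀)[h]⟩, where ⟨·,·⟩ is the Euclidean inner product on Fin N → ℝ; i.e., dI/dT = ∂I/∂T + ũᵀ · ∂f_T/∂T. -/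
/-!
Differentiating the state equation `K u(T) = f_ext + f_T(T)` gives `K u'(T₀)[h] = Df_T(T₀)[h]`,
and the chain rule splits `DĨ(T₀)[h]` into the explicit `T`-derivative of `I` plus the
`u`-derivative applied to `u'(T₀)[h] = K⁻¹ Df_T(T₀)[h]`. Writing the gradient as `g = Kᵀ ũ` and
moving `Kᵀ` across the inner product cancels `K⁻¹`, leaving `⟨ũ, Df_T(T₀)[h]⟩`.
-/

open Matrix

theorem Matrix.transpose_mulVec_dotProduct_inv_mulVec {n R : Type*} [Fintype n] [DecidableEq n]
    [CommRing R] {K : Matrix n n R} (hK : IsUnit K) (x v : n → R) :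
    (Kᵀ *ᵥ x) ⬝ᵥ (K⁻¹ *ᵥ v) = x ⬝ᵥ v := by
  rw [mulVec_transpose, ← dotProduct_mulVec, mulVec_mulVec,
    mul_nonsing_inv K ((isUnit_iff_isUnit_det K).mp hK), one_mulVec]

section Calculus

variable {𝕜 E F G : Type*} [NontriviallyNormedField 𝕜]
  [NormedAddCommGroup E] [NormedSpace 𝕜 E] [NormedAddCommGroup F] [NormedSpace 𝕜 F]
  [NormedAddCommGroup G] [NormedSpace 𝕜 G]

theorem hasFDerivAt_mulVec_const_add [CompleteSpace 𝕜] {m n : Type*} [Fintype m] [Fintype n]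
    (A : Matrix m n 𝕜) (c : n → 𝕜) {f : E → n → 𝕜} {f' : E →L[𝕜] n → 𝕜} {x : E}
    (hf : HasFDerivAt f f' x) :
    HasFDerivAt (fun y => A *ᵥ (c + f y)) ((mulVecLin A).toContinuousLinearMap ∘L f') x :=
  (mulVecLin A).toContinuousLinearMap.hasFDerivAt.comp x (hf.const_add c)

theorem fderiv_comp_prodMk_id_apply {I : E × F → G} {u : F → E} {x : F}
    (hI : DifferentiableAt 𝕜 I (u x, x)) (hu : DifferentiableAt 𝕜 u x) (h : F) :
    fderiv 𝕜 (fun y => I (u y, y)) x h =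
      fderiv 𝕜 (fun w => I (w, x)) (u x) (fderiv 𝕜 u x h) + fderiv 𝕜 (fun y => I (u x, y)) x h := by
  have hfst : HasFDerivAt (fun w => I (w, x)) (fderiv 𝕜 I (u x, x) ∘L .inl 𝕜 E F) (u x) :=
    hI.hasFDerivAt.comp (u x) (hasFDerivAt_prodMk_left (u x) x)
  have hsnd : HasFDerivAt (fun y => I (u x, y)) (fderiv 𝕜 I (u x, x) ∘L .inr 𝕜 E F) x :=
    hI.hasFDerivAt.comp x (hasFDerivAt_prodMk_right (u x) x)
  have htot : HasFDerivAt (fun y => I (u y, y))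
      (fderiv 𝕜 I (u x, x) ∘L (fderiv 𝕜 u x).prod (.id 𝕜 F)) x :=
    hI.hasFDerivAt.comp (f := fun y => (u y, y)) x (hu.hasFDerivAt.prodMk (hasFDerivAt_id x))
  rw [htot.fderiv, hfst.fderiv, hsnd.fderiv]
  simp [← map_add]

end Calculus

/-- Adjoint gradient identity for the reduced cost (single load case):
if `utilde` solves the adjoint system `Kᵀ ·ᵥ utilde = g` where `g` is the (Euclidean) gradient of
`u ↦ I (u, T₀)` at `u T₀`, then the reduced cost `Ĩ T = I (u T, T)` is differentiable at `T₀`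
and `DĨ(T₀)[h] = D_T I(u(T₀), ·)(T₀)[h] + ⟨utilde, Df_T(T₀)[h]⟩` for every direction `h`. -/
theorem adjoint_gradient_identity
    (N M : ℕ) (K : Matrix (Fin N) (Fin N) ℝ) (hK : IsUnit K)
    (f_ext : Fin N → ℝ) (f_T : (Fin M → ℝ) → (Fin N → ℝ))
    (hf : Differentiable ℝ f_T)
    (u : (Fin M → ℝ) → (Fin N → ℝ))
    (hu : ∀ T, u T = (K⁻¹).mulVec (f_ext + f_T T))
    (I : (Fin N → ℝ) × (Fin M → ℝ) → ℝ) (hI : Differentiable ℝ I)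
    (T₀ : Fin M → ℝ) (utilde g : Fin N → ℝ)
    (hg : ∀ v : Fin N → ℝ, fderiv ℝ (fun w => I (w, T₀)) (u T₀) v = ∑ i, g i * v i)
    (hadj : K.transpose.mulVec utilde = g) :
    DifferentiableAt ℝ (fun T => I (u T, T)) T₀ ∧
    ∀ h : Fin M → ℝ,
      fderiv ℝ (fun T => I (u T, T)) T₀ h =
        fderiv ℝ (fun T => I (u T₀, T)) T₀ h + ∑ i, utilde i * fderiv ℝ f_T T₀ h i := by
  have hu' : HasFDerivAt u ((mulVecLin K⁻¹).toContinuousLinearMap ∘L fderiv ℝ f_T T₀) T₀ := by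
    rw [funext hu]
    exact hasFDerivAt_mulVec_const_add K⁻¹ f_ext (hf T₀).hasFDerivAt
  refine ⟨(hI _).comp T₀ (hu'.differentiableAt.prodMk differentiableAt_id), fun h => ?_⟩
  rw [fderiv_comp_prodMk_id_apply (hI _) hu'.differentiableAt, hg, hu'.fderiv, add_comm]
  subst hadj
  exact congrArg _ (transpose_mulVec_dotProduct_inv_mulVec hK utilde (fderiv ℝ f_T T₀ h))
end

section
/- Multi-load-case adjoint gradient formula: let there be n load cases with external loads f_i : Fin N → ℝ and differentiable per-case costs I_i : (Fin N → ℝ) × (Fin M → ℝ) → ℝ, i = 1,…,n, and let u_i(T) = K⁻¹ ·ᵥ (f_i + f_T(T)) be the per-case solution maps. Fix T₀ and let ũ_i solve the adjoint systems Kᵀ ·ᵥ ũ_i = g_i, where g_i is the gradient of u ↦ I_i(u, T₀) at u_i(T₀). Then the total reduced cost Ĩ(T) = ∑_{i=1}^n I_i(u_i(T), T) is differentiable at T₀ and for every direction h, DĨ(T₀)[h] = ∑_{i=1}^n ( D_T I_i(u_i(T₀), ·)(T₀)[h] + ⟨ũ_i, Df_T(T₀)[h]⟩ ). -/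
/-! The cost depends on `T` both directly and through `u i T`. By the chain rule, the indirect
part of the derivative is `⟨g i, K⁻¹ (Df_T(T₀) h)⟩`, and the adjoint equation `Kᵀ ũ i = g i`
moves `K⁻¹` across the inner product: `⟨g i, K⁻¹ v⟩ = ⟨ũ i, v⟩`. So the state sensitivity
`K⁻¹ Df_T(T₀)` is never formed. Summing over the load cases gives the formula. -/

open Matrix

section ChainRule

variable {𝕜 E F G : Type*} [NontriviallyNormedField 𝕜]
  [NormedAddCommGroup E] [NormedSpace 𝕜 E] [NormedAddCommGroup F] [NormedSpace 𝕜 F]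
  [NormedAddCommGroup G] [NormedSpace 𝕜 G]

theorem DifferentiableAt.hasFDerivAt_comp_prodMk_id {Φ : E × F → G} {φ : F → E}
    {φ' : F →L[𝕜] E} {x₀ : F} (hΦ : DifferentiableAt 𝕜 Φ (φ x₀, x₀))
    (hφ : HasFDerivAt φ φ' x₀) :
    HasFDerivAt (fun x => Φ (φ x, x))
      ((fderiv 𝕜 (fun e => Φ (e, x₀)) (φ x₀)).comp φ' +
        fderiv 𝕜 (fun x => Φ (φ x₀, x)) x₀) x₀ := by
  have hleft : fderiv 𝕜 (fun e => Φ (e, x₀)) (φ x₀) =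
      (fderiv 𝕜 Φ (φ x₀, x₀)).comp (.inl 𝕜 E F) :=
    (hΦ.hasFDerivAt.comp (φ x₀) (hasFDerivAt_prodMk_left (φ x₀) x₀)).fderiv
  have hright : fderiv 𝕜 (fun x => Φ (φ x₀, x)) x₀ =
      (fderiv 𝕜 Φ (φ x₀, x₀)).comp (.inr 𝕜 E F) :=
    (hΦ.hasFDerivAt.comp x₀ (hasFDerivAt_prodMk_right (φ x₀) x₀)).fderiv
  have hcomp : HasFDerivAt (fun x => Φ (φ x, x))
      ((fderiv 𝕜 Φ (φ x₀, x₀)).comp (φ'.prod (.id 𝕜 F))) x₀ :=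
    hΦ.hasFDerivAt.comp (f := fun x => (φ x, x)) x₀ (hφ.prodMk (hasFDerivAt_id x₀))
  convert hcomp using 1
  ext h
  simp [hleft, hright, ← map_add]

variable [CompleteSpace 𝕜] {m n : Type*} [Fintype m] [Fintype n]

theorem HasFDerivAt.mulVec_const_add {φ : F → n → 𝕜} {φ' : F →L[𝕜] n → 𝕜} {x₀ : F}
    (hφ : HasFDerivAt φ φ' x₀) (A : Matrix m n 𝕜) (c : n → 𝕜) :
    HasFDerivAt (fun x => A *ᵥ (c + φ x)) ((mulVecLin A).toContinuousLinearMap.comp φ') x₀ :=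
  (mulVecLin A).toContinuousLinearMap.hasFDerivAt.comp x₀ (hφ.const_add c)

end ChainRule

theorem Matrix.dotProduct_inv_mulVec_of_transpose_mulVec {n R : Type*} [Fintype n]
    [DecidableEq n] [CommRing R] {K : Matrix n n R} (hK : IsUnit K) {ũ g : n → R}
    (hadj : Kᵀ *ᵥ ũ = g) (v : n → R) : g ⬝ᵥ (K⁻¹ *ᵥ v) = ũ ⬝ᵥ v := by
  rw [← hadj, mulVec_transpose, ← dotProduct_mulVec, mulVec_mulVec,
    mul_nonsing_inv K ((isUnit_iff_isUnit_det K).mp hK), one_mulVec]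

/-- Multi-load-case adjoint gradient formula: with per-case solution maps
`u i T = K⁻¹ ·ᵥ (f i + f_T T)` and adjoint solutions `Kᵀ ·ᵥ utilde i = g i` where `g i` is the
Euclidean gradient of `w ↦ I i (w, T₀)` at `u i T₀`, the total reduced cost
`Ĩ T = ∑ i, I i (u i T, T)` is differentiable at `T₀` and its directional derivative is
the sum of the per-case adjoint gradient contributions. -/
theorem multi_load_case_adjoint_gradient
    (N M n : ℕ) (K : Matrix (Fin N) (Fin N) ℝ) (hK : IsUnit K)
    (f : Fin n → Fin N → ℝ)
    (f_T : (Fin M → ℝ) → (Fin N → ℝ)) (hfT : Differentiable ℝ f_T)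
    (I : Fin n → (Fin N → ℝ) × (Fin M → ℝ) → ℝ) (hI : ∀ i, Differentiable ℝ (I i))
    (u : Fin n → (Fin M → ℝ) → (Fin N → ℝ))
    (hu : ∀ i T, u i T = (K⁻¹).mulVec (f i + f_T T))
    (T₀ : Fin M → ℝ) (utilde g : Fin n → Fin N → ℝ)
    (hg : ∀ i (v : Fin N → ℝ),
      fderiv ℝ (fun w => I i (w, T₀)) (u i T₀) v = ∑ j, g i j * v j)
    (hadj : ∀ i, K.transpose.mulVec (utilde i) = g i) :
    DifferentiableAt ℝ (fun T => ∑ i, I i (u i T, T)) T₀ ∧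
    ∀ h : Fin M → ℝ,
      fderiv ℝ (fun T => ∑ i, I i (u i T, T)) T₀ h =
        ∑ i, (fderiv ℝ (fun T => I i (u i T₀, T)) T₀ h +
              ∑ j, utilde i j * fderiv ℝ f_T T₀ h j) := by
  obtain rfl : u = fun i T => K⁻¹ *ᵥ (f i + f_T T) := funext₂ hu
  have hcase i := (hI i).differentiableAt.hasFDerivAt_comp_prodMk_id
    ((hfT T₀).hasFDerivAt.mulVec_const_add K⁻¹ (f i))
  refine ⟨.fun_sum fun i _ => (hcase i).differentiableAt, fun h => ?_⟩
  rw [fderiv_fun_sum fun i _ => (hcase i).differentiableAt]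
  simp only [FunLike.coe_sum, Finset.sum_apply, (hcase _).fderiv]
  refine Finset.sum_congr rfl fun i _ => ?_
  simp only [_root_.add_apply, ContinuousLinearMap.comp_apply,
    LinearMap.coe_toContinuousLinearMap', mulVecLin_apply, hg]
  rw [add_comm]
  congr 1
  exact dotProduct_inv_mulVec_of_transpose_mulVec hK (hadj i) _
end
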